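/- arXiv:1203.2480 — 2 statements merged into one kernel-verified Lean document; each statement's English description precedes it below -/
import Mathlib

section
/- Let d: [n] × [n] → ℝ be a function with matrix D = (-d(i,j)). Then d is a semimetric if and only if D is a max-plus idempotent of tropical rank n with all off-diagonal entries negative. -/
open scoped BigOperators

/-- Max-plus matrix product over ℝ. -/
noncomputable def tmul {n : ℕ} (A B : Fin n → Fin n → ℝ) : Fin n → Fin n → ℝ :=
  fun i j => ⨆ k, A i k + B k j

/-- Max-plus idempotency. -/
def IsTropIdem {n : ℕ} (A : Fin n → Fin n → ℝ) : Prop := tmul A A = A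

/-- Tropical permanent. -/
noncomputable def tperm {n : ℕ} (A : Fin n → Fin n → ℝ) : ℝ :=
  ⨆ σ : Equiv.Perm (Fin n), ∑ i, A i (σ i)

/-- The tropical permanent is attained by a unique permutation. -/
def UniqPerm {n : ℕ} (A : Fin n → Fin n → ℝ) : Prop :=
  ∃! σ : Equiv.Perm (Fin n), ∑ i, A i (σ i) = tperm A

/-- Tropical rank: the largest size of a square minor whose tropical
permanent is attained by a unique permutation. -/
noncomputable def tropRank {n : ℕ} (A : Fin n → Fin n → ℝ) : ℕ :=
  sSup {k : ℕ | ∃ r c : Fin k ↪ Fin n, UniqPerm (fun i j => A (r i) (c j))}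

/-- Column space: all max-plus linear combinations of the columns. -/
def colSpace {n : ℕ} (A : Fin n → Fin n → ℝ) : Set (Fin n → ℝ) :=
  {x | ∃ lam : Fin n → ℝ, ∀ i, x i = ⨆ j, lam j + A i j}

/-- Residuation distance δ(x,y) = max_k (x_k - y_k). -/
noncomputable def tdelta {n : ℕ} (x y : Fin n → ℝ) : ℝ := ⨆ k, (x k - y k)

/-- Residuation operator ⟨x∣y⟩ = min_k (y_k - x_k). -/
noncomputable def tresid {n : ℕ} (x y : Fin n → ℝ) : ℝ := ⨅ k, (y k - x k)

/-- Tropical Hilbert projective metric. -/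
noncomputable def tHilbert {n : ℕ} (x y : Fin n → ℝ) : ℝ :=
  (tdelta x y + tdelta y x) / 2

/-! Negating `d` turns the semimetric axioms into: zero diagonal, nonpositive entries, and the
tropical triangle inequality `D i k + D k j ≤ D i j`. Given a zero diagonal, the triangle
inequality is exactly idempotency, and negative off-diagonal entries make the identity the unique
optimal permutation; a full-size minor is a reindexing of `D`, so tropical rank `n` means that the
optimal permutation of `D` is unique.

Conversely, let `σ` be the unique optimal permutation of an idempotent `D`, and write
`D a (σ a) = D a k + D k (σ a)`. Swapping `σ` at `a` and `σ⁻¹ k` does not decrease the permutation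
sum (triangle inequality), so uniqueness forces `k = σ a`, i.e. `D (σ a) (σ a) = 0`. -/

open Finset

lemma sum_mul_swap_add {ι M : Type*} [Fintype ι] [DecidableEq ι] [AddCommGroup M] (A : ι → ι → M) (σ : Equiv.Perm ι) (a p : ι) :
    ∑ i, A i ((σ * Equiv.swap a p) i) + (A a (σ a) + A p (σ p)) =
      ∑ i, A i (σ i) + (A a (σ p) + A p (σ a)) := by
  rcases eq_or_ne a p with rfl | hap
  · simp
  have hdiff : ∑ i, (A i ((σ * Equiv.swap a p) i) - A i (σ i)) =
      (A a (σ p) - A a (σ a)) + (A p (σ a) - A p (σ p)) := by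
    rw [Fintype.sum_eq_add a p hap fun x hx => by
      simp [Equiv.swap_apply_of_ne_of_ne hx.1 hx.2]]
    simp
  rw [sum_sub_distrib, sub_eq_iff_eq_add] at hdiff
  rw [hdiff]
  abel

section TropicalMatrix

variable {n : ℕ} {A : Fin n → Fin n → ℝ}

lemma IsTropIdem.add_le (hA : IsTropIdem A) (i j k : Fin n) : A i k + A k j ≤ A i j := by
  rw [← congrFun₂ hA i j]
  exact le_ciSup (f := fun k => A i k + A k j) (Set.finite_range _).bddAbove k

lemma IsTropIdem.exists_eq_add (hA : IsTropIdem A) (i j : Fin n) :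
    ∃ k, A i j = A i k + A k j := by
  have : Nonempty (Fin n) := ⟨i⟩
  obtain ⟨k, hk⟩ := Finite.exists_max fun k => A i k + A k j
  refine ⟨k, le_antisymm ?_ (hA.add_le i j k)⟩
  rw [← congrFun₂ hA i j]
  exact ciSup_le hk

lemma isTropIdem_of_add_le (hdiag : ∀ i, A i i = 0)
    (htri : ∀ i j k, A i k + A k j ≤ A i j) : IsTropIdem A := by
  funext i j
  have : Nonempty (Fin n) := ⟨i⟩
  refine le_antisymm (ciSup_le (htri i j)) ?_
  calc A i j = A i j + A j j := by rw [hdiag, add_zero]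
    _ ≤ tmul A A i j := le_ciSup (f := fun k => A i k + A k j) (Set.finite_range _).bddAbove j

lemma sum_le_tperm (A : Fin n → Fin n → ℝ) (σ : Equiv.Perm (Fin n)) :
    ∑ i, A i (σ i) ≤ tperm A :=
  le_ciSup (f := fun σ : Equiv.Perm (Fin n) => ∑ i, A i (σ i)) (Set.finite_range _).bddAbove σ

lemma IsTropIdem.diag_eq_zero (hA : IsTropIdem A) (hU : UniqPerm A) (i : Fin n) :
    A i i = 0 := by
  obtain ⟨σ, hσ, hσ_uniq⟩ := hU
  obtain ⟨a, rfl⟩ := σ.surjective i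
  obtain ⟨k, hk⟩ := hA.exists_eq_add a (σ a)
  have hswap : σ * Equiv.swap a (σ.symm k) = σ := by
    refine hσ_uniq _ (le_antisymm (sum_le_tperm _ _) ?_)
    have hsum := sum_mul_swap_add A σ a (σ.symm k)
    have htri := hA.add_le (σ.symm k) (σ a) k
    simp only [Equiv.apply_symm_apply] at hsum
    linarith
  have hka : k = σ a := by
    simpa using congrArg (· a) hswap
  have hdiag := hA.add_le (σ a) (σ a) (σ a)
  rw [hka] at hk
  linarith

lemma uniqPerm_of_offDiag_neg (hdiag : ∀ i, A i i = 0)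
    (hoff : ∀ i j, i ≠ j → A i j < 0) : UniqPerm A := by
  have hle : ∀ i j, A i j ≤ 0 := fun i j => by
    rcases eq_or_ne i j with rfl | h
    · exact (hdiag i).le
    · exact (hoff i j h).le
  have hone : ∑ i, A i ((1 : Equiv.Perm (Fin n)) i) = 0 := by simp [hdiag]
  have htperm : tperm A = 0 :=
    le_antisymm (ciSup_le fun σ => sum_nonpos fun i _ => hle i (σ i))
      (hone ▸ sum_le_tperm A 1)
  refine ⟨1, hone.trans htperm.symm, fun σ hσ => ?_⟩
  by_contra hne
  obtain ⟨x, hx⟩ : ∃ x, σ x ≠ x := not_forall.mp fun h => hne (Equiv.ext h)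
  have hneg : ∑ i, A i (σ i) < 0 :=
    sum_neg' (fun i _ => hle i (σ i)) ⟨x, mem_univ x, hoff x (σ x) hx.symm⟩
  linarith

lemma uniqPerm_reindex (e f : Equiv.Perm (Fin n)) :
    UniqPerm (fun i j => A (e i) (f j)) ↔ UniqPerm A := by
  let Φ : Equiv.Perm (Fin n) ≃ Equiv.Perm (Fin n) :=
    (Equiv.mulLeft f).trans (Equiv.mulRight e⁻¹)
  have hsum : ∀ σ, ∑ i, A (e i) (f (σ i)) = ∑ j, A j (Φ σ j) := fun σ => by
    rw [← Equiv.sum_comp e fun j => A j (Φ σ j)]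
    simp [Φ]
  have htperm : tperm (fun i j => A (e i) (f j)) = tperm A := by
    simp only [tperm, hsum]
    exact Φ.iSup_comp (g := fun τ => ∑ i, A i (τ i))
  simp only [UniqPerm, htperm, hsum]
  exact Φ.existsUnique_congr_right (q := fun τ => ∑ i, A i (τ i) = tperm A)

lemma uniqPerm_of_isEmpty (B : Fin 0 → Fin 0 → ℝ) : UniqPerm B :=
  ⟨1, by simp [tperm], fun _ _ => Subsingleton.elim _ _⟩

def uniqMinorSizes (A : Fin n → Fin n → ℝ) : Set ℕ :=
  {k | ∃ r c : Fin k ↪ Fin n, UniqPerm (fun i j => A (r i) (c j))}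

lemma le_of_mem_uniqMinorSizes {k : ℕ} (hk : k ∈ uniqMinorSizes A) : k ≤ n := by
  obtain ⟨r, -, -⟩ := hk
  simpa using Fintype.card_le_of_embedding r

lemma zero_mem_uniqMinorSizes : 0 ∈ uniqMinorSizes A :=
  ⟨.ofIsEmpty, .ofIsEmpty, uniqPerm_of_isEmpty _⟩

lemma self_mem_uniqMinorSizes_iff : n ∈ uniqMinorSizes A ↔ UniqPerm A := by
  refine ⟨fun ⟨r, c, h⟩ => ?_, fun h => ⟨.refl _, .refl _, h⟩⟩
  exact (uniqPerm_reindex (Equiv.ofBijective r (Finite.injective_iff_bijective.mp r.injective))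
    (Equiv.ofBijective c (Finite.injective_iff_bijective.mp c.injective))).mp h

lemma tropRank_eq_self_iff : tropRank A = n ↔ UniqPerm A := by
  have hbdd : BddAbove (uniqMinorSizes A) := ⟨n, fun _ => le_of_mem_uniqMinorSizes⟩
  change sSup (uniqMinorSizes A) = n ↔ _
  rw [← self_mem_uniqMinorSizes_iff]
  constructor
  · intro h
    have hmem := Nat.sSup_mem ⟨0, zero_mem_uniqMinorSizes⟩ hbdd
    rwa [h] at hmem
  · intro h
    exact le_antisymm (csSup_le ⟨n, h⟩ fun _ => le_of_mem_uniqMinorSizes) (le_csSup hbdd h)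

end TropicalMatrix

theorem stmt12_general (n : ℕ) (d : Fin n → Fin n → ℝ)
    (D : Fin n → Fin n → ℝ) (hD : ∀ i j, D i j = -d i j) :
    ((∀ i, d i i = 0) ∧ (∀ i j k, d i j ≤ d i k + d k j) ∧
     (∀ i j, 0 ≤ d i j) ∧ (∀ i j, i ≠ j → d i j ≠ 0)) ↔
    (IsTropIdem D ∧ tropRank D = n ∧ ∀ i j, i ≠ j → D i j < 0) := by
  obtain rfl : d = fun i j => -D i j := by
    funext i j
    linarith [hD i j]
  rw [tropRank_eq_self_iff]
  simp only [ne_eq, neg_eq_zero, neg_nonneg]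
  constructor
  · rintro ⟨hdiag, htri, hnonpos, hne⟩
    have hoff : ∀ i j, i ≠ j → D i j < 0 := fun i j h => (hnonpos i j).lt_of_ne (hne i j h)
    exact ⟨isTropIdem_of_add_le hdiag fun i j k => by linarith [htri i j k],
      uniqPerm_of_offDiag_neg hdiag hoff, hoff⟩
  · rintro ⟨hA, hU, hoff⟩
    refine ⟨hA.diag_eq_zero hU, fun i j k => by linarith [hA.add_le i j k], fun i j => ?_,
      fun i j h => (hoff i j h).ne⟩
    rcases eq_or_ne i j with rfl | h
    · exact (hA.diag_eq_zero hU i).le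
    · exact (hoff i j h).le

theorem stmt12 (n : ℕ) (hn : 0 < n) (d : Fin n → Fin n → ℝ)
    (D : Fin n → Fin n → ℝ) (hD : ∀ i j, D i j = -d i j) :
    ((∀ i, d i i = 0) ∧ (∀ i j k, d i j ≤ d i k + d k j) ∧
     (∀ i j, 0 ≤ d i j) ∧ (∀ i j, i ≠ j → d i j ≠ 0)) ↔
    (IsTropIdem D ∧ tropRank D = n ∧ ∀ i j, i ≠ j → D i j < 0) :=
  stmt12_general n d D hD
end

section
/- Let D be a symmetric max-plus idempotent matrix in M_n(ℝ). The following are equivalent: (i) D has tropical rank n; (ii) D has a 0 in every diagonal position and nowhere else; (iii) D has a 0 in every diagonal position and all off-diagonal entries negative. -/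
open scoped BigOperators

/-!
Idempotency gives `D i k + D k j ≤ D i j`, with equality for some `k`; together with symmetry
this yields `2 D i j ≤ D i i + D j j`, so every entry is `≤ 0` and the identity permutation
attains the tropical permanent. A full-size minor is a row and column permutation of `D`, so
tropical rank `n` means that the identity is the unique optimal permutation. A transposition
`(i k)` with `D i i + D k k ≤ D i k + D k i` would be optimal as well: if `D i i < 0`, take `k`
with `D i k + D k i = D i i`; if the diagonal vanishes, take `k` with `D i k = 0`. Conversely,
with zero diagonal and negative off-diagonal entries, every term of an optimal permutation
must vanish, which forces it to be the identity.
-/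

lemma uniqPerm_fin_zero (A : Fin 0 → Fin 0 → ℝ) : UniqPerm A :=
  ⟨1, by simp [tperm], fun _ _ => Subsingleton.elim _ _⟩

lemma uniqPerm_reindex_iff {n : ℕ} (A : Fin n → Fin n → ℝ) (e f : Equiv.Perm (Fin n)) :
    UniqPerm (fun i j => A (e i) (f j)) ↔ UniqPerm A := by
  have hsum (σ : Equiv.Perm (Fin n)) :
      ∑ i, A (e i) (f (σ i)) = ∑ i, A i ((f * σ * e⁻¹) i) := by
    rw [← Equiv.sum_comp e (fun i => A i ((f * σ * e⁻¹) i))]; simp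
  let Φ : Equiv.Perm (Fin n) ≃ Equiv.Perm (Fin n) :=
    (Equiv.mulLeft f).trans (Equiv.mulRight e⁻¹)
  have htperm : tperm (fun i j => A (e i) (f j)) = tperm A := by
    simp only [tperm, hsum]
    exact Φ.iSup_comp (g := fun τ => ∑ i, A i (τ i))
  simp only [UniqPerm, htperm, hsum]
  exact Φ.existsUnique_congr_right (q := fun τ => ∑ i, A i (τ i) = tperm A)

lemma tropRank_eq_iff_uniqPerm {n : ℕ} (A : Fin n → Fin n → ℝ) :
    tropRank A = n ↔ UniqPerm A := by
  set S := {k : ℕ | ∃ r c : Fin k ↪ Fin n, UniqPerm (fun i j => A (r i) (c j))}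
  have hle : ∀ k ∈ S, k ≤ n := by
    rintro k ⟨r, -, -⟩
    simpa using Fintype.card_le_of_embedding r
  have hzero : 0 ∈ S :=
    ⟨Function.Embedding.ofIsEmpty, Function.Embedding.ofIsEmpty, uniqPerm_fin_zero _⟩
  constructor
  · intro h
    obtain ⟨r, c, hU⟩ : n ∈ S := h ▸ Nat.sSup_mem ⟨0, hzero⟩ ⟨n, hle⟩
    exact (uniqPerm_reindex_iff A r.equivOfFiniteSelfEmbedding c.equivOfFiniteSelfEmbedding).mp hU
  · intro h
    exact le_antisymm (csSup_le' hle)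
      (le_csSup ⟨n, hle⟩ ⟨Function.Embedding.refl _, Function.Embedding.refl _, h⟩)

lemma sum_apply_swap {n : ℕ} (A : Fin n → Fin n → ℝ) {i k : Fin n} (hik : i ≠ k) :
    ∑ m, A m (Equiv.swap i k m) = ∑ m, A m m - A i i - A k k + A i k + A k i := by
  have hdiff : ∑ m, (A m (Equiv.swap i k m) - A m m) = A i k - A i i + (A k i - A k k) := by
    rw [← Finset.sum_subset (Finset.subset_univ {i, k}), Finset.sum_pair hik]
    · simp
    · intro m _ hm
      simp only [Finset.mem_insert, Finset.mem_singleton, not_or] at hm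
      simp [Equiv.swap_apply_of_ne_of_ne hm.1 hm.2]
  rw [Finset.sum_sub_distrib] at hdiff
  linarith

lemma sum_apply_perm_le_trace {n : ℕ} {A : Fin n → Fin n → ℝ}
    (hA : ∀ i j, 2 * A i j ≤ A i i + A j j) (σ : Equiv.Perm (Fin n)) :
    ∑ i, A i (σ i) ≤ ∑ i, A i i := by
  have h := Finset.sum_le_sum fun i (_ : i ∈ Finset.univ) => hA i (σ i)
  rw [← Finset.mul_sum, Finset.sum_add_distrib, Equiv.sum_comp σ (fun i => A i i)] at h
  linarith

lemma tperm_eq_trace {n : ℕ} {A : Fin n → Fin n → ℝ} (hA : ∀ i j, 2 * A i j ≤ A i i + A j j) :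
    tperm A = ∑ i, A i i :=
  le_antisymm (ciSup_le (sum_apply_perm_le_trace hA))
    (by simpa [tperm] using Finite.le_ciSup (fun σ : Equiv.Perm (Fin n) => ∑ i, A i (σ i)) 1)

lemma eq_of_uniqPerm_of_diag_le {n : ℕ} {A : Fin n → Fin n → ℝ}
    (hA : ∀ i j, 2 * A i j ≤ A i i + A j j) (hU : UniqPerm A) {i k : Fin n}
    (hik : A i i + A k k ≤ A i k + A k i) : i = k := by
  by_contra hne
  have hopt (σ : Equiv.Perm (Fin n)) (hσ : ∑ i, A i i ≤ ∑ i, A i (σ i)) :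
      ∑ i, A i (σ i) = tperm A := by
    rw [tperm_eq_trace hA]; exact le_antisymm (sum_apply_perm_le_trace hA σ) hσ
  have hswap : Equiv.swap i k = 1 := hU.unique
    (hopt _ (by rw [sum_apply_swap A hne]; linarith)) (hopt 1 (by simp))
  have h := Equiv.ext_iff.mp hswap i
  simp only [Equiv.swap_apply_left, Equiv.Perm.one_apply] at h
  exact hne h.symm

namespace IsTropIdem

variable {n : ℕ} {A : Fin n → Fin n → ℝ}

lemma add_le_s13 (hA : IsTropIdem A) (i j k : Fin n) : A i k + A k j ≤ A i j := by
  rw [← congrFun (congrFun hA i) j]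
  exact Finite.le_ciSup (fun k => A i k + A k j) k

lemma exists_add_eq (hA : IsTropIdem A) (i j : Fin n) : ∃ k, A i k + A k j = A i j := by
  have : Nonempty (Fin n) := ⟨i⟩
  obtain ⟨k, hk⟩ := exists_eq_ciSup_of_finite (f := fun k => A i k + A k j)
  exact ⟨k, hk.trans (congrFun (congrFun hA i) j)⟩

variable (hA : IsTropIdem A) (hsymm : ∀ i j, A i j = A j i)
include hA hsymm

lemma two_mul_le_diag (i k : Fin n) : 2 * A i k ≤ A i i := by
  linarith [hA.add_le_s13 i i k, hsymm k i]

lemma diag_nonpos (i : Fin n) : A i i ≤ 0 := by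
  linarith [hA.two_mul_le_diag hsymm i i]

lemma two_mul_le_diag_add_diag (i j : Fin n) : 2 * A i j ≤ A i i + A j j := by
  obtain ⟨k, hk⟩ := hA.exists_add_eq i j
  linarith [hA.two_mul_le_diag hsymm i k, hA.two_mul_le_diag hsymm j k, hsymm k j]

lemma nonpos (i j : Fin n) : A i j ≤ 0 := by
  linarith [hA.two_mul_le_diag_add_diag hsymm i j, hA.diag_nonpos hsymm i,
    hA.diag_nonpos hsymm j]

lemma uniqPerm_iff : UniqPerm A ↔ (∀ i, A i i = 0) ∧ ∀ i j, i ≠ j → A i j ≠ 0 := by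
  have hA2 := hA.two_mul_le_diag_add_diag hsymm
  constructor
  · intro hU
    have hdiag (i : Fin n) : A i i = 0 := by
      obtain ⟨k, hk⟩ := hA.exists_add_eq i i
      obtain rfl : i = k := eq_of_uniqPerm_of_diag_le hA2 hU
        (by linarith [hsymm k i, hA.diag_nonpos hsymm k])
      linarith
    refine ⟨hdiag, fun i j hij hzero => hij (eq_of_uniqPerm_of_diag_le hA2 hU ?_)⟩
    rw [hdiag, hdiag, hsymm j i, hzero]
  · rintro ⟨hdiag, hoff⟩
    refine ⟨1, by simp [tperm_eq_trace hA2], fun σ hσ => ?_⟩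
    rw [tperm_eq_trace hA2, Finset.sum_eq_zero fun i _ => hdiag i] at hσ
    have hzero := (Finset.sum_eq_zero_iff_of_nonpos fun i _ => hA.nonpos hsymm i (σ i)).mp hσ
    refine Equiv.ext fun i => of_not_not fun hne => ?_
    exact hoff i (σ i) (Ne.symm hne) (hzero i (Finset.mem_univ i))

end IsTropIdem

theorem stmt13_general (n : ℕ) (D : Fin n → Fin n → ℝ)
    (hidem : IsTropIdem D) (hsymm : ∀ i j, D i j = D j i) :
    (tropRank D = n ↔
      ((∀ i, D i i = 0) ∧ ∀ i j, i ≠ j → D i j ≠ 0)) ∧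
    (((∀ i, D i i = 0) ∧ ∀ i j, i ≠ j → D i j ≠ 0) ↔
      ((∀ i, D i i = 0) ∧ ∀ i j, i ≠ j → D i j < 0)) := by
  rw [tropRank_eq_iff_uniqPerm, hidem.uniqPerm_iff hsymm]
  refine ⟨Iff.rfl, and_congr_right fun _ => forall₂_congr fun i j => imp_congr_right fun _ => ?_⟩
  exact (hidem.nonpos hsymm i j).lt_iff_ne.symm

theorem stmt13 (n : ℕ) (hn : 0 < n) (D : Fin n → Fin n → ℝ)
    (hidem : IsTropIdem D) (hsymm : ∀ i j, D i j = D j i) :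
    (tropRank D = n ↔
      ((∀ i, D i i = 0) ∧ ∀ i j, i ≠ j → D i j ≠ 0)) ∧
    (((∀ i, D i i = 0) ∧ ∀ i j, i ≠ j → D i j ≠ 0) ↔
      ((∀ i, D i i = 0) ∧ ∀ i j, i ≠ j → D i j < 0)) :=
  stmt13_general n D hidem hsymm
end
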